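/- Every real number x with 0 ≤ x ≤ 1 admits a base-e expansion with digits in {0, 1, 2}: there exists a sequence of digits a : ℕ → {0, 1, 2} such that x = ∑_{n=0}^∞ a_n · e^{-(n+1)}. -/
import Mathlib

noncomputable def baseERem (x : ℝ) : ℕ → ℝ
  | 0 => x
  | n + 1 => Int.fract (Real.exp 1 * baseERem x n)

lemma baseERem_mem (x : ℝ) (hx0 : 0 ≤ x) (hx1 : x ≤ 1) :
    ∀ n, 0 ≤ baseERem x n ∧ baseERem x n ≤ 1 := by
  intro n
  induction n with
  | zero => exact ⟨hx0, hx1⟩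
  | succ n _ => exact ⟨Int.fract_nonneg _, le_of_lt (Int.fract_lt_one _)⟩

/-- Every x ∈ [0,1] has a base-e expansion x = ∑_{n=0}^∞ aₙ e^{-(n+1)} with
digits aₙ ∈ {0, 1, 2}. -/
theorem base_e_expansion (x : ℝ) (hx0 : 0 ≤ x) (hx1 : x ≤ 1) :
    ∃ a : ℕ → ℕ, (∀ n, a n ≤ 2) ∧
      HasSum (fun n : ℕ => (a n : ℝ) * Real.exp 1 ^ (-(n + 1 : ℤ))) x := by
  set e := Real.exp 1 with he
  have he1 : 1 < e := by
    have := Real.exp_one_gt_d9; linarith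
  have he3 : e < 3 := by
    have := Real.exp_one_lt_d9; linarith
  have he0 : 0 < e := by linarith
  set r := baseERem x with hr
  have hrmem := baseERem_mem x hx0 hx1
  set a : ℕ → ℕ := fun n => (⌊e * r n⌋).toNat with ha
  have hfloor_nonneg : ∀ n, 0 ≤ ⌊e * r n⌋ := fun n =>
    Int.floor_nonneg.mpr (mul_nonneg he0.le (hrmem n).1)
  have hacast : ∀ n, (a n : ℝ) = (⌊e * r n⌋ : ℝ) := by
    intro n
    have h := Int.toNat_of_nonneg (hfloor_nonneg n)
    exact_mod_cast congrArg (Int.cast : ℤ → ℝ) h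
  have hale : ∀ n, a n ≤ 2 := by
    intro n
    have h3 : ⌊e * r n⌋ < 3 := by
      rw [Int.floor_lt]
      push_cast
      nlinarith [(hrmem n).1, (hrmem n).2]
    simp only [ha]
    omega
  -- partial sum identity
  have key : ∀ N, ∑ n ∈ Finset.range N, (a n : ℝ) * e ^ (-(n + 1 : ℤ))
      = x - r N * e ^ (-(N : ℤ)) := by
    intro N
    induction N with
    | zero =>
      rw [Finset.sum_range_zero]
      have : r 0 = x := rfl
      rw [this]
      norm_num
    | succ N ih =>
      rw [Finset.sum_range_succ, ih]
      have hrN : r (N + 1) = e * r N - (⌊e * r N⌋ : ℝ) := by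
        have : r (N + 1) = Int.fract (e * r N) := rfl
        rw [this, Int.fract]
      rw [hrN, hacast N]
      have hepow : e ^ (-((N : ℤ) + 1)) * e = e ^ (-(N : ℤ)) := by
        rw [show (-((N : ℤ) + 1)) = -(N : ℤ) + (-1) from by ring, zpow_add₀ he0.ne',
          zpow_neg_one, mul_assoc, inv_mul_cancel₀ he0.ne', mul_one]
      push_cast
      linear_combination (r N) * hepow
  refine ⟨a, hale, ?_⟩
  have hpow_eq : ∀ n : ℕ, e ^ (-(n + 1 : ℤ)) = (e⁻¹) ^ (n + 1) := by
    intro n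
    rw [inv_pow, ← zpow_natCast, ← zpow_neg]
    congr 1
  -- summability
  have hsum : Summable (fun n : ℕ => (a n : ℝ) * e ^ (-(n + 1 : ℤ))) := by
    have hgeo : Summable (fun n : ℕ => 2 * (e⁻¹) ^ (n + 1)) := by
      apply Summable.mul_left
      exact (summable_geometric_of_lt_one (by positivity)
        (inv_lt_one_of_one_lt₀ he1)).comp_injective (add_left_injective 1)
    apply Summable.of_nonneg_of_le (fun n => by positivity) _ hgeo
    intro n
    rw [hpow_eq n]
    have h2 : (a n : ℝ) ≤ 2 := by exact_mod_cast hale n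
    have hp : (0:ℝ) ≤ (e⁻¹) ^ (n + 1) := by positivity
    nlinarith
  have hts := hsum.hasSum
  have htend := hts.tendsto_sum_nat
  -- partial sums also tend to x
  have htend2 : Filter.Tendsto (fun N => ∑ n ∈ Finset.range N, (a n : ℝ) * e ^ (-(n + 1 : ℤ)))
      Filter.atTop (nhds x) := by
    simp only [key]
    have h0 : Filter.Tendsto (fun N : ℕ => r N * e ^ (-(N : ℤ))) Filter.atTop (nhds 0) := by
      have hb : Filter.Tendsto (fun N : ℕ => (e⁻¹) ^ N) Filter.atTop (nhds 0) :=
        tendsto_pow_atTop_nhds_zero_of_lt_one (by positivity) (inv_lt_one_of_one_lt₀ he1)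
      apply squeeze_zero (fun N => mul_nonneg (hrmem N).1 (by positivity)) _ hb
      intro N
      have h1 : e ^ (-(N : ℤ)) = (e⁻¹) ^ N := by
        rw [inv_pow, ← zpow_natCast, ← zpow_neg]
      rw [h1]
      have hp : (0:ℝ) ≤ (e⁻¹) ^ N := by positivity
      nlinarith [(hrmem N).2, (hrmem N).1]
    have := Filter.Tendsto.const_sub x h0
    simpa using this
  have : ∑' n, (a n : ℝ) * e ^ (-(n + 1 : ℤ)) = x :=
    tendsto_nhds_unique htend htend2
  rwa [this] at hts
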